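/- Upper bound of the compatibility factor by the CIF: with the cone C_a and the quantities K_a, ζ_{a,∞} defined below, one has K_a ≤ 2(1+a)·|T|·ζ_{a,∞}/(1−a)²; moreover, every θ ∈ C_a satisfies |θ|_∞ ≤ ((1+a)/(1−a))·|θ_T|₁ and |θ|₁ ≤ (2/(1−a))·|θ_T|₁. -/

import Mathlib

/-! For `θ` in the cone, Hölder's inequality gives `θᵀXᵀXθ ≤ |θ|₁ |XᵀXθ|_∞`, and the cone
condition gives `|θ|₁ ≤ 2/(1−a) |θ_T|₁` and `|θ|_∞ ≤ (1+a)/(1−a) |θ_T|₁`. Hence the ratio whose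
infimum is `K_a` is, at every point of the cone, at most `2(1+a)|T|/(1−a)²` times the ratio whose
infimum is `ζ_{a,∞}`, and the bound passes to the infima. -/

open scoped BigOperators

/-- The ℓ∞ norm of a vector. -/
noncomputable def linf {p : ℕ} (v : Fin p → ℝ) : ℝ := ⨆ j, |v j|

/-- The cone C_a = {θ : |θ_{T'}|₁ ≤ ((1+a)/(1−a)) |θ_T|₁}. -/
def coneT {p : ℕ} (T : Finset (Fin p)) (a : ℝ) : Set (Fin p → ℝ) :=
  {θ | ∑ j ∈ Tᶜ, |θ j| ≤ (1 + a) / (1 - a) * ∑ j ∈ T, |θ j|}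

/-- The quadratic form θᵀXᵀXθ = ‖Xθ‖₂². -/
noncomputable def quadF {n p : ℕ} (X : Matrix (Fin n) (Fin p) ℝ) (θ : Fin p → ℝ) : ℝ :=
  ∑ i, (X.mulVec θ i) ^ 2

/-- The restricted eigenvalue RE_a. -/
noncomputable def REa {n p : ℕ} (X : Matrix (Fin n) (Fin p) ℝ) (T : Finset (Fin p))
    (a : ℝ) : ℝ :=
  sInf ((fun θ => quadF X θ / ∑ j, θ j ^ 2) '' (coneT T a ∩ {θ | θ ≠ 0}))

/-- The compatibility factor K_a. -/
noncomputable def Ka {n p : ℕ} (X : Matrix (Fin n) (Fin p) ℝ) (T : Finset (Fin p))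
    (a : ℝ) : ℝ :=
  sInf ((fun θ => (T.card : ℝ) * quadF X θ / (∑ j ∈ T, |θ j|) ^ 2) ''
    (coneT T a ∩ {θ | θ ≠ 0}))

/-- The cone invertibility factor ζ_{a,2}. -/
noncomputable def zeta2 {n p : ℕ} (X : Matrix (Fin n) (Fin p) ℝ) (T : Finset (Fin p))
    (a : ℝ) : ℝ :=
  sInf ((fun θ => Real.sqrt (T.card : ℝ) * linf (X.transpose.mulVec (X.mulVec θ)) /
      Real.sqrt (∑ j, θ j ^ 2)) '' (coneT T a ∩ {θ | θ ≠ 0}))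

/-- The cone invertibility factor ζ_{a,∞}. -/
noncomputable def zetaInf {n p : ℕ} (X : Matrix (Fin n) (Fin p) ℝ) (T : Finset (Fin p))
    (a : ℝ) : ℝ :=
  sInf ((fun θ => linf (X.transpose.mulVec (X.mulVec θ)) / linf θ) ''
    (coneT T a ∩ {θ | θ ≠ 0}))

open scoped Matrix

lemma abs_le_linf {p : ℕ} (v : Fin p → ℝ) (j : Fin p) : |v j| ≤ linf v :=
  le_ciSup (f := fun j => |v j|) (Set.finite_range _).bddAbove j

lemma linf_le {p : ℕ} {v : Fin p → ℝ} {c : ℝ} (hv : ∀ j, |v j| ≤ c) (hc : 0 ≤ c) :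
    linf v ≤ c :=
  Real.iSup_le hv hc

lemma linf_nonneg {p : ℕ} (v : Fin p → ℝ) : 0 ≤ linf v :=
  Real.iSup_nonneg fun _ => abs_nonneg _

lemma linf_pos {p : ℕ} {v : Fin p → ℝ} (hv : v ≠ 0) : 0 < linf v := by
  obtain ⟨j, hj⟩ := Function.ne_iff.mp hv
  exact (abs_pos.mpr hj).trans_le (abs_le_linf v j)

lemma dotProduct_le_sum_abs_mul_linf {p : ℕ} (u v : Fin p → ℝ) :
    u ⬝ᵥ v ≤ (∑ j, |u j|) * linf v := by
  rw [Finset.sum_mul]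
  refine Finset.sum_le_sum fun j _ => ?_
  calc u j * v j ≤ |u j| * |v j| := by rw [← abs_mul]; exact le_abs_self _
    _ ≤ |u j| * linf v := by gcongr; exact abs_le_linf v j

lemma quadF_eq_dotProduct {n p : ℕ} (X : Matrix (Fin n) (Fin p) ℝ) (θ : Fin p → ℝ) :
    quadF X θ = θ ⬝ᵥ Xᵀ *ᵥ (X *ᵥ θ) := by
  rw [Matrix.dotProduct_mulVec, Matrix.vecMul_transpose]
  simp only [quadF, dotProduct, sq]

lemma quadF_le_sum_abs_mul_linf {n p : ℕ} (X : Matrix (Fin n) (Fin p) ℝ) (θ : Fin p → ℝ) :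
    quadF X θ ≤ (∑ j, |θ j|) * linf (Xᵀ *ᵥ (X *ᵥ θ)) :=
  quadF_eq_dotProduct X θ ▸ dotProduct_le_sum_abs_mul_linf _ _

lemma quadF_nonneg {n p : ℕ} (X : Matrix (Fin n) (Fin p) ℝ) (θ : Fin p → ℝ) :
    0 ≤ quadF X θ :=
  Finset.sum_nonneg fun _ _ => sq_nonneg _

section Cone

variable {p : ℕ} {T : Finset (Fin p)} {a : ℝ} {θ : Fin p → ℝ}

lemma one_le_coneT_ratio (ha₀ : 0 ≤ a) (ha₁ : a < 1) : 1 ≤ (1 + a) / (1 - a) := by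
  rw [le_div_iff₀ (by linarith)]
  linarith

lemma abs_le_coneT_ratio_mul (hθ : θ ∈ coneT T a) (ha₀ : 0 ≤ a) (ha₁ : a < 1) (j : Fin p) :
    |θ j| ≤ (1 + a) / (1 - a) * ∑ i ∈ T, |θ i| := by
  have hsingle {s : Finset (Fin p)} (hj : j ∈ s) : |θ j| ≤ ∑ i ∈ s, |θ i| :=
    Finset.single_le_sum (f := fun i => |θ i|) (fun i _ => abs_nonneg _) hj
  by_cases hj : j ∈ T
  · exact (hsingle hj).trans <| le_mul_of_one_le_left
      (Finset.sum_nonneg fun _ _ => abs_nonneg _) (one_le_coneT_ratio ha₀ ha₁)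
  · exact (hsingle (Finset.mem_compl.mpr hj)).trans hθ

lemma linf_le_of_mem_coneT (hθ : θ ∈ coneT T a) (ha₀ : 0 ≤ a) (ha₁ : a < 1) :
    linf θ ≤ (1 + a) / (1 - a) * ∑ j ∈ T, |θ j| :=
  linf_le (abs_le_coneT_ratio_mul hθ ha₀ ha₁) <|
    mul_nonneg (by linarith [one_le_coneT_ratio ha₀ ha₁])
      (Finset.sum_nonneg fun _ _ => abs_nonneg _)

lemma sum_abs_le_of_mem_coneT (hθ : θ ∈ coneT T a) (ha₁ : a < 1) :
    ∑ j, |θ j| ≤ 2 / (1 - a) * ∑ j ∈ T, |θ j| := by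
  have hsplit : ∑ j, |θ j| = ∑ j ∈ T, |θ j| + ∑ j ∈ Tᶜ, |θ j| :=
    (Finset.sum_add_sum_compl T _).symm
  have hratio : 2 / (1 - a) = 1 + (1 + a) / (1 - a) := by
    field_simp [show 1 - a ≠ 0 by linarith]
    ring
  rw [hsplit, hratio, add_mul, one_mul]
  exact add_le_add_right hθ _

lemma sum_abs_pos_of_mem_coneT (hθ : θ ∈ coneT T a) (hθ₀ : θ ≠ 0) :
    0 < ∑ j ∈ T, |θ j| := by
  refine (Finset.sum_nonneg fun _ _ => abs_nonneg _).lt_of_ne fun hT => hθ₀ ?_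
  have hTc : ∑ j ∈ Tᶜ, |θ j| = 0 :=
    le_antisymm (by simpa [← hT] using hθ.out) (Finset.sum_nonneg fun _ _ => abs_nonneg _)
  have hzero : ∑ j, |θ j| = 0 := by rw [← Finset.sum_add_sum_compl T, ← hT, hTc, add_zero]
  funext j
  exact abs_eq_zero.mp ((Finset.sum_eq_zero_iff_of_nonneg fun _ _ => abs_nonneg _).mp hzero j
    (Finset.mem_univ j))

lemma single_mem_coneT {j : Fin p} (hj : j ∈ T) (ha₀ : 0 ≤ a) (ha₁ : a < 1) :
    Pi.single j 1 ∈ coneT T a := by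
  have hTc : ∑ i ∈ Tᶜ, |(Pi.single j (1 : ℝ) : Fin p → ℝ) i| = 0 :=
    Finset.sum_eq_zero fun i hi => by
      rw [Pi.single_eq_of_ne (by rintro rfl; exact Finset.mem_compl.mp hi hj), abs_zero]
  rw [coneT, Set.mem_ofPred_eq, hTc]
  exact mul_nonneg (by linarith [one_le_coneT_ratio ha₀ ha₁])
    (Finset.sum_nonneg fun _ _ => abs_nonneg _)

end Cone

lemma csInf_image_le_mul_csInf_image {α : Type*} {s : Set α} {f g : α → ℝ} {c : ℝ}
    (hc : 0 < c) (hs : s.Nonempty) (hf : BddBelow (f '' s)) (hfg : ∀ x ∈ s, f x ≤ c * g x) :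
    sInf (f '' s) ≤ c * sInf (g '' s) := by
  rw [← div_le_iff₀' hc]
  refine le_csInf (hs.image g) ?_
  rintro _ ⟨x, hx, rfl⟩
  rw [div_le_iff₀' hc]
  exact (csInf_le hf ⟨x, hx, rfl⟩).trans (hfg x hx)

lemma card_mul_quadF_div_sq_le {n p : ℕ} (X : Matrix (Fin n) (Fin p) ℝ) {T : Finset (Fin p)}
    {a : ℝ} (ha₀ : 0 ≤ a) (ha₁ : a < 1) {θ : Fin p → ℝ} (hθ : θ ∈ coneT T a) (hθ₀ : θ ≠ 0) :
    (T.card : ℝ) * quadF X θ / (∑ j ∈ T, |θ j|) ^ 2 ≤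
      2 * (1 + a) * T.card / (1 - a) ^ 2 * (linf (Xᵀ *ᵥ (X *ᵥ θ)) / linf θ) := by
  set S := ∑ j ∈ T, |θ j|
  set M := linf (Xᵀ *ᵥ (X *ᵥ θ))
  have hS : 0 < S := sum_abs_pos_of_mem_coneT hθ hθ₀
  have hL : 0 < linf θ := linf_pos hθ₀
  have hM : 0 ≤ M := linf_nonneg _
  have h1a : 0 < 1 - a := by linarith
  have hquad : quadF X θ ≤ 2 / (1 - a) * S * M :=
    (quadF_le_sum_abs_mul_linf X θ).trans <|
      mul_le_mul_of_nonneg_right (sum_abs_le_of_mem_coneT hθ ha₁) hM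
  have hlinf : linf θ * (1 - a) / (1 + a) ≤ S := by
    have h := linf_le_of_mem_coneT hθ ha₀ ha₁
    rw [div_mul_eq_mul_div, le_div_iff₀ h1a] at h
    rw [div_le_iff₀ (by linarith)]
    linarith
  calc (T.card : ℝ) * quadF X θ / S ^ 2
      ≤ T.card * (2 / (1 - a) * S * M) / S ^ 2 := by gcongr
    _ = 2 * T.card / (1 - a) * M / S := by field_simp
    _ ≤ 2 * T.card / (1 - a) * M / (linf θ * (1 - a) / (1 + a)) := by gcongr
    _ = 2 * (1 + a) * T.card / (1 - a) ^ 2 * (M / linf θ) := by field_simp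

theorem stmt18_general {n p : ℕ}
    (X : Matrix (Fin n) (Fin p) ℝ)
    (T : Finset (Fin p)) (hT : T.Nonempty)
    (a : ℝ) (ha : a ∈ Set.Ioo (0 : ℝ) 1) :
    Ka X T a ≤ 2 * (1 + a) * (T.card : ℝ) * zetaInf X T a / (1 - a) ^ 2 ∧
    ∀ θ ∈ coneT T a,
      linf θ ≤ (1 + a) / (1 - a) * ∑ j ∈ T, |θ j| ∧
      ∑ j, |θ j| ≤ 2 / (1 - a) * ∑ j ∈ T, |θ j| := by
  obtain ⟨ha₀, ha₁⟩ := ha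
  refine ⟨?_, fun θ hθ => ⟨linf_le_of_mem_coneT hθ ha₀.le ha₁, sum_abs_le_of_mem_coneT hθ ha₁⟩⟩
  have hc : 0 < 2 * (1 + a) * T.card / (1 - a) ^ 2 :=
    div_pos (mul_pos (by linarith) (by exact_mod_cast hT.card_pos)) (pow_pos (by linarith) 2)
  obtain ⟨j, hj⟩ := hT
  have hcone : (coneT T a ∩ {θ | θ ≠ 0}).Nonempty :=
    ⟨Pi.single j 1, single_mem_coneT hj ha₀.le ha₁, Pi.single_ne_zero_iff.mpr one_ne_zero⟩
  have hKa_bdd : BddBelow ((fun θ => (T.card : ℝ) * quadF X θ / (∑ j ∈ T, |θ j|) ^ 2) ''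
      (coneT T a ∩ {θ | θ ≠ 0})) := by
    refine ⟨0, ?_⟩
    rintro _ ⟨θ, -, rfl⟩
    exact div_nonneg (mul_nonneg (Nat.cast_nonneg _) (quadF_nonneg X θ)) (sq_nonneg _)
  calc Ka X T a ≤ 2 * (1 + a) * T.card / (1 - a) ^ 2 * zetaInf X T a :=
        csInf_image_le_mul_csInf_image hc hcone hKa_bdd fun θ hθ =>
          card_mul_quadF_div_sq_le X ha₀.le ha₁ hθ.1 hθ.2
    _ = 2 * (1 + a) * T.card * zetaInf X T a / (1 - a) ^ 2 := by ring

/-- Upper bound of the compatibility factor by the CIF: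
K_a ≤ 2(1+a)|T| ζ_{a,∞}/(1−a)²; moreover every θ ∈ C_a satisfies
|θ|_∞ ≤ ((1+a)/(1−a)) |θ_T|₁ and |θ|₁ ≤ (2/(1−a)) |θ_T|₁. -/
theorem stmt18 {n p : ℕ} (hn : 0 < n) (hp : 0 < p)
    (X : Matrix (Fin n) (Fin p) ℝ)
    (T : Finset (Fin p)) (hT : T.Nonempty)
    (a : ℝ) (ha : a ∈ Set.Ioo (0 : ℝ) 1) :
    Ka X T a ≤ 2 * (1 + a) * (T.card : ℝ) * zetaInf X T a / (1 - a) ^ 2 ∧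
    ∀ θ ∈ coneT T a,
      linf θ ≤ (1 + a) / (1 - a) * ∑ j ∈ T, |θ j| ∧
      ∑ j, |θ j| ≤ 2 / (1 - a) * ∑ j ∈ T, |θ j| :=
  stmt18_general X T hT a ha
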